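/- Let p ∈ K[X] be monic irreducible with p(0) ≠ 0 such that reverse(p) is not a scalar multiple of p, let p̄₀ = p(0)⁻¹ • reverse(p), and let u be a symplectic transformation of E with minimal polynomial p^k · p̄₀^k. Then the group of symplectic transformations of E commuting with u is isomorphic (as a group) to the group of K-linear automorphisms of the subspace E¹ = ker p(u)^k that commute with the restriction of u to E¹. -/

import Mathlib

/-!
Since `p` is irreducible and not proportional to its reverse, `p ^ k` and `p̄₀ ^ k` are coprime,
so `E = E¹ ⊕ E²` with `E² = ker p̄₀(u) ^ k`. The `B`-adjoint of `f(u)` is `f(u⁻¹)`, and `p(u⁻¹)` is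
`p̄₀(u)` up to an invertible factor; hence `E¹` and `E²` are totally isotropic, and `B` is a perfect
pairing between them. Every isometry commuting with `u` preserves `E¹` and `E²` and is determined by
its restriction to `E¹`. Conversely, an automorphism `v` of `E¹` extends to an isometry acting on
`E² ≅ (E¹)*` by the contragredient of `v`; if `v` commutes with `u|E¹`, uniqueness shows that the
extension commutes with `u`.
-/

open Polynomial

namespace Polynomial

theorem reverse_pow {R : Type*} [Semiring R] [NoZeroDivisors R] (f : R[X]) (n : ℕ) :
    (f ^ n).reverse = f.reverse ^ n := by
  induction n with
  | zero => simpa using reverse_C (1 : R)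
  | succ n ih => rw [pow_succ, reverse_mul_of_domain, ih, pow_succ]

section Reflect

variable {R A : Type*} [CommSemiring R] [Semiring A] [Algebra R A] (x : A) [Invertible x]

theorem pow_mul_aeval_invOf_reflect {N : ℕ} {f : R[X]} (hf : f.natDegree ≤ N) :
    x ^ N * aeval (⅟x) (reflect N f) = aeval x f := by
  refine induction_with_natDegree_le (fun f => x ^ N * aeval (⅟x) (reflect N f) = aeval x f) N
    (by simp) (fun n r _ hn => ?_) (fun f g _ _ hf hg => ?_) f hf
  · obtain ⟨m, rfl⟩ := Nat.exists_eq_add_of_le hn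
    rw [reflect_C_mul_X_pow, revAt_le hn, Nat.add_sub_cancel_left, map_mul, map_mul, aeval_C,
      aeval_C, aeval_X_pow, aeval_X_pow, ← mul_assoc, ← Algebra.commutes, mul_assoc, pow_add,
      mul_assoc, ← invOf_pow, mul_invOf_self, mul_one]
  · rw [reflect_add, map_add, mul_add, hf, hg, map_add]

theorem pow_natDegree_mul_aeval_invOf_reverse (f : R[X]) :
    x ^ f.natDegree * aeval (⅟x) f.reverse = aeval x f :=
  pow_mul_aeval_invOf_reflect x le_rfl

end Reflect

theorem isCoprime_reverse {K : Type*} [Field K] {p : K[X]} (hirr : Irreducible p)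
    (hp0 : p.eval 0 ≠ 0) (hns : ¬ ∃ c : K, p.reverse = c • p) : IsCoprime p p.reverse := by
  refine hirr.coprime_iff_not_dvd.2 fun ⟨t, ht⟩ => hns ?_
  have hp : p ≠ 0 := fun h => hp0 (by simp [h])
  have ht0 : t ≠ 0 := by rintro rfl; simp_all
  have htd : p.natTrailingDegree = 0 :=
    natTrailingDegree_eq_zero.2 (Or.inr (by rwa [coeff_zero_eq_eval_zero]))
  have hdeg : t.natDegree = 0 := by
    have := congrArg natDegree ht
    rw [reverse_natDegree, htd, natDegree_mul hp ht0] at this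
    omega
  obtain ⟨c, rfl⟩ := natDegree_eq_zero.1 hdeg
  exact ⟨c, by rw [ht, smul_eq_C_mul, mul_comm]⟩

end Polynomial

theorem Commute.aeval_right {R A : Type*} [CommSemiring R] [Semiring A] [Algebra R A] {a b : A}
    (h : Commute a b) (f : R[X]) : Commute a (aeval b f) :=
  Algebra.commute_of_mem_adjoin_singleton_of_commute (aeval_mem_adjoin_singleton R b) h

section Endomorphism

variable {R M : Type*} [CommRing R] [AddCommGroup M] [Module R M]

theorem Polynomial.isCompl_ker_aeval_of_isCoprime (T : Module.End R M) {f g : R[X]}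
    (hfg : IsCoprime f g) (h : aeval T (f * g) = 0) :
    IsCompl (LinearMap.ker (aeval T f)) (LinearMap.ker (aeval T g)) :=
  ⟨disjoint_ker_aeval_of_isCoprime T hfg, codisjoint_iff.2 (by
    rw [sup_ker_aeval_eq_ker_aeval_mul_of_coprime T hfg, h, LinearMap.ker_zero])⟩

theorem Module.End.mapsTo_ker_aeval {T w : Module.End R M} (h : Commute w T) (f : R[X]) :
    Set.MapsTo w (LinearMap.ker (aeval T f)) (LinearMap.ker (aeval T f)) := fun x hx => by
  rw [SetLike.mem_coe, LinearMap.mem_ker] at hx ⊢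
  rw [← Module.End.mul_apply, ← (h.aeval_right f).eq, Module.End.mul_apply, hx, map_zero]

theorem LinearEquiv.ker_aeval_symm_reverse (u : M ≃ₗ[R] M) (f : R[X]) :
    LinearMap.ker (aeval (u.symm : Module.End R M) f.reverse) =
      LinearMap.ker (aeval (u : Module.End R M) f) := by
  let _ : Invertible (u : Module.End R M) :=
    ⟨u.symm, LinearMap.ext u.symm_apply_apply, LinearMap.ext u.apply_symm_apply⟩
  have hpow : LinearMap.ker ((u : Module.End R M) ^ f.natDegree) = ⊥ := by
    rw [LinearMap.ker_eq_bot, Module.End.coe_pow]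
    exact u.injective.iterate _
  rw [← pow_natDegree_mul_aeval_invOf_reverse (u : Module.End R M) f, Module.End.mul_eq_comp,
    LinearMap.ker_comp_of_ker_eq_bot _ hpow]
  rfl

theorem Submodule.exists_add_eq_of_codisjoint {L L' : Submodule R M} (h : Codisjoint L L')
    (x : M) : ∃ (y : L) (z : L'), (y : M) + z = x :=
  Submodule.mem_sup'.1 (codisjoint_iff.1 h ▸ Submodule.mem_top)

end Endomorphism

theorem Submodule.map_eq_of_mapsTo {K E : Type*} [Field K] [AddCommGroup E] [Module K E]
    [FiniteDimensional K E] (w : E ≃ₗ[K] E) {L : Submodule K E} (h : Set.MapsTo w L L) :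
    L.map (w : E →ₗ[K] E) = L :=
  Submodule.eq_of_le_of_finrank_eq (Submodule.map_le_iff_le_comap.2 h) (w.finrank_map_eq L)

section BilinearForm

open Function

variable {K E : Type*} [Field K] [AddCommGroup E] [Module K E] (B : E →ₗ[K] E →ₗ[K] K)

def IsTotallyIsotropic (L : Submodule K E) : Prop :=
  ∀ x ∈ L, ∀ y ∈ L, B x y = 0

theorem LinearMap.IsAdjointPair.aeval {g h : Module.End K E} (hgh : IsAdjointPair B B g h)
    (f : K[X]) : IsAdjointPair B B (aeval g f) (aeval h f) := by
  have hpow (n : ℕ) : IsAdjointPair B B ⇑(g ^ n) ⇑(h ^ n) := by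
    induction n with
    | zero => exact isAdjointPair_one
    | succ n ih => rw [pow_succ, pow_succ']; exact ih.mul hgh
  induction f using Polynomial.induction_on' with
  | add f f' hf hf' => rw [map_add, map_add]; exact hf.add hf'
  | monomial n a =>
    rw [aeval_monomial, aeval_monomial, ← Algebra.smul_def, ← Algebra.smul_def,
      LinearMap.coe_smul, LinearMap.coe_smul]
    exact (hpow n).smul a

variable {B}

theorem isAdjointPair_symm_of_isometry {u : E ≃ₗ[K] E} (hu : ∀ x y, B (u x) (u y) = B x y) :
    B.IsAdjointPair B (u.symm : Module.End K E) (u : Module.End K E) := fun x y => by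
  rw [← hu, LinearEquiv.coe_coe, LinearEquiv.coe_coe, u.apply_symm_apply]

theorem isTotallyIsotropic_ker_aeval {u : E ≃ₗ[K] E} (hu : ∀ x y, B (u x) (u y) = B x y)
    {f g : K[X]} (hfg : IsCoprime f g)
    (hle : LinearMap.ker (aeval (u : Module.End K E) f) ≤
      LinearMap.ker (aeval (u.symm : Module.End K E) g)) :
    IsTotallyIsotropic B (LinearMap.ker (aeval (u : Module.End K E) f)) := by
  obtain ⟨a, b, hab⟩ := hfg
  intro x hx y hy
  have hy' : aeval (u : Module.End K E) (g * b) y = y := by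
    have hay : aeval (u : Module.End K E) (a * f) y = 0 := by
      rw [map_mul, Module.End.mul_apply, hy, map_zero]
    rw [mul_comm, ← zero_add (aeval (u : Module.End K E) (b * g) y), ← hay, ← LinearMap.add_apply,
      ← map_add, hab, map_one, Module.End.one_apply]
  rw [← hy', map_mul, Module.End.mul_apply, ← (isAdjointPair_symm_of_isometry hu).aeval B g,
    hle hx, map_zero, LinearMap.zero_apply]

theorem injective_of_isometry (hnd : B.SeparatingLeft) {w : E →ₗ[K] E}
    (hw : ∀ x y, B (w x) (w y) = B x y) : Injective w :=
  (injective_iff_map_eq_zero w).2 fun x hx => hnd x fun y => by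
    rw [← hw, hx, map_zero, LinearMap.zero_apply]

variable {L L' : Submodule K E}

theorem IsTotallyIsotropic.eq_zero_of_codisjoint (hL' : IsTotallyIsotropic B L')
    (hnd : B.SeparatingLeft) (hLL' : Codisjoint L L') {x : E} (hx : x ∈ L')
    (h : ∀ y ∈ L, B x y = 0) : x = 0 :=
  hnd x fun z => by
    obtain ⟨y, y', rfl⟩ := Submodule.exists_add_eq_of_codisjoint hLL' z
    rw [map_add, h y y.2, hL' x hx y' y'.2, add_zero]

theorem IsTotallyIsotropic.eq_of_isometry_of_eqOn (hL' : IsTotallyIsotropic B L')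
    (hnd : B.SeparatingLeft) (hLL' : Codisjoint L L') {w w' : E ≃ₗ[K] E}
    (hw : ∀ x y, B (w x) (w y) = B x y) (hw' : ∀ x y, B (w' x) (w' y) = B x y)
    (hwL' : Set.MapsTo w L' L') (hw'L' : Set.MapsTo w' L' L') (heq : Set.EqOn w w' L) :
    w = w' := by
  have hL'eq (x : E) (hx : x ∈ L') : w x = w' x := by
    have hd : w x - w' x ∈ L' := sub_mem (hwL' hx) (hw'L' hx)
    rw [← sub_eq_zero]
    refine hnd _ fun z => ?_
    obtain ⟨y, y', hyy'⟩ := Submodule.exists_add_eq_of_codisjoint hLL' (w.symm z)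
    rw [← w.apply_symm_apply z, ← hyy', map_add, map_add, hL' _ hd _ (hwL' y'.2), add_zero,
      map_sub, LinearMap.sub_apply, hw, heq y.2, hw', sub_self]
  ext z
  obtain ⟨y, y', rfl⟩ := Submodule.exists_add_eq_of_codisjoint hLL' z
  rw [map_add, map_add, heq y.2, hL'eq y' y'.2]

variable [FiniteDimensional K E]

theorem isPerfPair_domRestrict₁₂_of_isCompl (hB : B.IsAlt) (hnd : B.SeparatingLeft)
    (hLL' : IsCompl L L') (hL : IsTotallyIsotropic B L) (hL' : IsTotallyIsotropic B L') :
    (B.domRestrict₁₂ L' L).IsPerfPair := by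
  refine .of_injective ((injective_iff_map_eq_zero _).2 fun x hx => ?_)
    ((injective_iff_map_eq_zero _).2 fun y hy => ?_)
  · exact Subtype.ext <| hL'.eq_zero_of_codisjoint hnd hLL'.codisjoint x.2 fun y hy =>
      congr_fun (congrArg DFunLike.coe hx) ⟨y, hy⟩
  · refine Subtype.ext <| hL.eq_zero_of_codisjoint hnd hLL'.symm.codisjoint y.2 fun x hx => ?_
    rw [← hB.neg, neg_eq_zero]
    exact congr_fun (congrArg DFunLike.coe hy) ⟨x, hx⟩

theorem exists_isometry_extend_of_isCompl (hB : B.IsAlt) (hnd : B.SeparatingLeft)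
    (hLL' : IsCompl L L') (hL : IsTotallyIsotropic B L) (hL' : IsTotallyIsotropic B L')
    (v : L ≃ₗ[K] L) :
    ∃ w : E ≃ₗ[K] E, (∀ x y, B (w x) (w y) = B x y) ∧ (∀ x : L, w x = v x) ∧
      Set.MapsTo w L' L' := by
  have := isPerfPair_domRestrict₁₂_of_isCompl hB hnd hLL' hL hL'
  set P := B.domRestrict₁₂ L' L
  -- the contragredient of `v` under the perfect pairing `P` between `L'` and `L`
  let v' : L' ≃ₗ[K] L' := P.toPerfPair.trans (v.symm.dualMap.trans P.toPerfPair.symm)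
  have hv' (x : L') (y : L) : B (v' x) (v y) = B x y := by
    have := congr_fun (congrArg DFunLike.coe
      (P.apply_symm_toPerfPair_self (v.symm.dualMap (P x)))) (v y)
    rwa [LinearEquiv.dualMap_apply, v.symm_apply_apply] at this
  let w := LinearMap.ofIsCompl hLL' (L.subtype ∘ₗ v) (L'.subtype ∘ₗ v')
  have hwL (x : L) : w x = v x := LinearMap.ofIsCompl_apply_left hLL' x
  have hwL' (x : L') : w x = v' x := LinearMap.ofIsCompl_apply_right hLL' x
  have hw (x y : E) : B (w x) (w y) = B x y := by
    obtain ⟨x₁, x₂, rfl⟩ := Submodule.exists_add_eq_of_codisjoint hLL'.codisjoint x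
    obtain ⟨y₁, y₂, rfl⟩ := Submodule.exists_add_eq_of_codisjoint hLL'.codisjoint y
    simp only [map_add, LinearMap.add_apply, hwL, hwL']
    rw [hL _ (v x₁).2 _ (v y₁).2, hL _ x₁.2 _ y₁.2, hL' _ (v' x₂).2 _ (v' y₂).2, hL' _ x₂.2 _ y₂.2,
      hv', ← hB.neg (v' y₂ : E), hv', hB.neg]
  exact ⟨.ofInjectiveEndo w (injective_of_isometry hnd hw), hw, hwL,
    fun x hx => (hwL' ⟨x, hx⟩).symm ▸ (v' ⟨x, hx⟩).2⟩

end BilinearForm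

theorem exists_centralizer_equiv_restrict_of_isCompl {K E : Type*} [Field K] [AddCommGroup E]
    [Module K E] [FiniteDimensional K E] {B : E →ₗ[K] E →ₗ[K] K} (hB : B.IsAlt)
    (hnd : B.SeparatingLeft) (u : E ≃ₗ[K] E) (hu : ∀ x y, B (u x) (u y) = B x y)
    {L L' : Submodule K E} (hLL' : IsCompl L L') (hL : IsTotallyIsotropic B L)
    (hL' : IsTotallyIsotropic B L')
    (hcent : ∀ w : E ≃ₗ[K] E, (∀ x, w (u x) = u (w x)) → Set.MapsTo w L L ∧ Set.MapsTo w L' L')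
    (hinv : ∀ x ∈ L, (u : E →ₗ[K] E) x ∈ L) :
    ∃ φ : {w : E ≃ₗ[K] E // (∀ x y, B (w x) (w y) = B x y) ∧ ∀ x, w (u x) = u (w x)} ≃
        {v : L ≃ₗ[K] L // ∀ x : L,
          v (((u : E →ₗ[K] E).restrict hinv) x) = ((u : E →ₗ[K] E).restrict hinv) (v x)},
      ∀ a b c, (∀ x : E, c.1 x = a.1 (b.1 x)) →
        ∀ y : L, (φ c).1 y = (φ a).1 ((φ b).1 y) := by
  let F : {w : E ≃ₗ[K] E // (∀ x y, B (w x) (w y) = B x y) ∧ ∀ x, w (u x) = u (w x)} →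
      {v : L ≃ₗ[K] L // ∀ x : L,
        v (((u : E →ₗ[K] E).restrict hinv) x) = ((u : E →ₗ[K] E).restrict hinv) (v x)} :=
    fun w => ⟨w.1.ofSubmodules L L (Submodule.map_eq_of_mapsTo w.1 (hcent w.1 w.2.2).1),
      fun x => Subtype.ext (w.2.2 x)⟩
  refine ⟨.ofBijective F ⟨fun w w' h => Subtype.ext ?_, fun v => ?_⟩,
    fun a b c h y => Subtype.ext (h y)⟩
  · exact hL'.eq_of_isometry_of_eqOn hnd hLL'.codisjoint w.2.1 w'.2.1 (hcent _ w.2.2).2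
      (hcent _ w'.2.2).2 fun x hx => congrArg (fun v => ((Subtype.val v) ⟨x, hx⟩ : E)) h
  obtain ⟨w, hw, hwv, hwL'⟩ := exists_isometry_extend_of_isCompl hB hnd hLL' hL hL' v.1
  have huL' : Set.MapsTo u L' L' := (hcent u fun _ => rfl).2
  have hcomm : u.trans w = w.trans u := by
    refine hL'.eq_of_isometry_of_eqOn hnd hLL'.codisjoint (by simp [hw, hu]) (by simp [hw, hu])
      (hwL'.comp huL') (huL'.comp hwL') fun x hx => ?_
    change w (u x) = u (w x)
    rw [hwv ⟨x, hx⟩]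
    exact (hwv ⟨u x, hinv x hx⟩).trans (congrArg Subtype.val (v.2 ⟨x, hx⟩))
  exact ⟨⟨w, hw, LinearEquiv.congr_fun hcomm⟩,
    Subtype.ext (LinearEquiv.ext fun x => Subtype.ext (hwv x))⟩

theorem stmt_10_general {K E : Type*} [Field K]
    [AddCommGroup E] [Module K E] [FiniteDimensional K E]
    (B : E →ₗ[K] E →ₗ[K] K) (halt : ∀ x, B x x = 0)
    (hnd : ∀ x, (∀ y, B x y = 0) → x = 0)
    (u : E ≃ₗ[K] E) (hu : ∀ x y, B (u x) (u y) = B x y)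
    (p : K[X]) (hirr : Irreducible p) (hp0 : p.eval 0 ≠ 0)
    (hns : ¬ ∃ c : K, p.reverse = c • p)
    (k : ℕ)
    (hmin : minpoly K (u : Module.End K E) = p ^ k * ((p.eval 0)⁻¹ • p.reverse) ^ k)
    (E₁ : Submodule K E)
    (hE₁ : E₁ = LinearMap.ker ((aeval (u : Module.End K E) p) ^ k))
    (hinv : ∀ x ∈ E₁, (u : E →ₗ[K] E) x ∈ E₁) :
    ∃ φ : {w : E ≃ₗ[K] E // (∀ x y, B (w x) (w y) = B x y) ∧ ∀ x, w (u x) = u (w x)} ≃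
        {v : E₁ ≃ₗ[K] E₁ // ∀ x : E₁,
          v (((u : E →ₗ[K] E).restrict hinv) x) = ((u : E →ₗ[K] E).restrict hinv) (v x)},
      ∀ a b c, (∀ x : E, c.1 x = a.1 (b.1 x)) →
        ∀ y : E₁, (φ c).1 y = (φ a).1 ((φ b).1 y) := by
  set q : K[X] := (p.eval 0)⁻¹ • p.reverse with hq
  have hcop : IsCoprime (p ^ k) (q ^ k) := by
    refine IsCoprime.pow ?_
    rw [hq, smul_eq_C_mul, isCoprime_mul_unit_left_right (isUnit_C.2 (inv_ne_zero hp0).isUnit)]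
    exact isCoprime_reverse hirr hp0 hns
  have hann : aeval (u : Module.End K E) (p ^ k * q ^ k) = 0 := hmin ▸ minpoly.aeval K _
  -- `q(v⁻¹) ^ k` is `p(v) ^ k` up to an invertible factor
  have hdual (v : E ≃ₗ[K] E) : LinearMap.ker (aeval (v.symm : Module.End K E) (q ^ k)) =
      LinearMap.ker (aeval (v : Module.End K E) (p ^ k)) := by
    rw [hq, _root_.smul_pow, map_smul, LinearMap.ker_smul _ _ (pow_ne_zero _ (inv_ne_zero hp0)),
      ← reverse_pow, v.ker_aeval_symm_reverse]
  obtain rfl : E₁ = LinearMap.ker (aeval (u : Module.End K E) (p ^ k)) := by rw [hE₁, map_pow]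
  refine exists_centralizer_equiv_restrict_of_isCompl halt hnd u hu
    (isCompl_ker_aeval_of_isCoprime _ hcop hann) (isTotallyIsotropic_ker_aeval hu hcop (hdual u).ge)
    (isTotallyIsotropic_ker_aeval hu hcop.symm (by rw [← hdual u.symm, LinearEquiv.symm_symm]))
    (fun w hw => ?_) hinv
  have hwu : Commute (w : Module.End K E) u := LinearMap.ext hw
  exact ⟨Module.End.mapsTo_ker_aeval hwu _, Module.End.mapsTo_ker_aeval hwu _⟩

/-- For a symplectic `u` with minimal polynomial `p^k * p̄₀^k` (`p` monic irreducible,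
`p(0) ≠ 0`, `reverse p` not a scalar multiple of `p`, `p̄₀ = p(0)⁻¹ • reverse p`), the group of
symplectic transformations commuting with `u` is isomorphic to the group of linear automorphisms
of `E¹ = ker p(u)^k` commuting with the restriction of `u` to `E¹`: there is a bijection
respecting composition. -/
theorem stmt_10 {K E : Type*} [Field K] (hchar : (2 : K) ≠ 0)
    [AddCommGroup E] [Module K E] [FiniteDimensional K E]
    (B : E →ₗ[K] E →ₗ[K] K) (halt : ∀ x, B x x = 0)
    (hnd : ∀ x, (∀ y, B x y = 0) → x = 0)
    (u : E ≃ₗ[K] E) (hu : ∀ x y, B (u x) (u y) = B x y)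
    (p : K[X]) (hp : p.Monic) (hirr : Irreducible p) (hp0 : p.eval 0 ≠ 0)
    (hns : ¬ ∃ c : K, p.reverse = c • p)
    (k : ℕ)
    (hmin : minpoly K (u : Module.End K E) = p ^ k * ((p.eval 0)⁻¹ • p.reverse) ^ k)
    (E₁ : Submodule K E)
    (hE₁ : E₁ = LinearMap.ker ((aeval (u : Module.End K E) p) ^ k))
    (hinv : ∀ x ∈ E₁, (u : E →ₗ[K] E) x ∈ E₁) :
    ∃ φ : {w : E ≃ₗ[K] E // (∀ x y, B (w x) (w y) = B x y) ∧ ∀ x, w (u x) = u (w x)} ≃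
        {v : E₁ ≃ₗ[K] E₁ // ∀ x : E₁,
          v (((u : E →ₗ[K] E).restrict hinv) x) = ((u : E →ₗ[K] E).restrict hinv) (v x)},
      ∀ a b c, (∀ x : E, c.1 x = a.1 (b.1 x)) →
        ∀ y : E₁, (φ c).1 y = (φ a).1 ((φ b).1 y) :=
  stmt_10_general B halt hnd u hu p hirr hp0 hns k hmin E₁ hE₁ hinv
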